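/- For every natural number n ≥ 1 and real x, the n-th derivative of the logistic function satisfies |σ^(n)(x)| ≤ (n+1)! · max_{1 ≤ k ≤ n+1} S(n+1, k) · σ(min(x, -x)), where S denotes Stirling numbers of the second kind. In particular |σ^(n)(x)| ≤ (n+1)! · max_{1 ≤ k ≤ n+1} S(n+1,k) · min(σ(x), σ(-x)). -/

import Mathlib

/-!
Since `σ' = σ - σ²`, every derivative of `σ` is a polynomial in `σ`, namely
`σ⁽ⁿ⁾ = ∑ₖ (-1)^(k+1) (k-1)! S(n+1,k) σᵏ` with no constant term. On `0 < σ < 1` each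
`σᵏ` with `k ≥ 1` is at most `σ`, and each of the `n + 1` coefficients is at most
`n! · maxₖ S(n+1,k)` in absolute value, so `|σ⁽ⁿ⁾(x)| ≤ (n+1)! · maxₖ S(n+1,k) · σ(x)`.
For `n ≥ 1` the relation `σ(-x) = 1 - σ(x)` makes `|σ⁽ⁿ⁾|` even, which gives the same bound
with `σ(-x)`, hence with the minimum.
-/

/-- The logistic function. -/
noncomputable def logistic (x : ℝ) : ℝ := 1 / (1 + Real.exp (-x))

/-- Stirling numbers of the second kind. -/
def stirling2 : ℕ → ℕ → ℕ
  | 0, 0 => 1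
  | 0, _ + 1 => 0
  | _ + 1, 0 => 0
  | m + 1, n + 1 => (n + 1) * stirling2 m (n + 1) + stirling2 m n

open Polynomial Finset

lemma logistic_eq_sigmoid : logistic = Real.sigmoid :=
  funext fun _ => one_div _

lemma stirling2_eq_stirlingSecond : stirling2 = Nat.stirlingSecond := by
  funext m k
  induction m generalizing k with
  | zero => cases k <;> rfl
  | succ m ih => cases k <;> simp [stirling2, Nat.stirlingSecond, ih]

namespace Polynomial

lemma abs_eval_le_sum_abs_coeff_succ_mul {p : ℝ[X]} {N : ℕ} (hN : p.natDegree ≤ N)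
    (h0 : p.coeff 0 = 0) {t : ℝ} (ht0 : 0 ≤ t) (ht1 : t ≤ 1) :
    |p.eval t| ≤ (∑ k ∈ range N, |p.coeff (k + 1)|) * t := by
  rw [eval_eq_sum_range' (Nat.lt_succ_of_le hN), sum_range_succ', h0, zero_mul, add_zero,
    sum_mul]
  refine (abs_sum_le_sum_abs _ _).trans (sum_le_sum fun k _ => ?_)
  rw [abs_mul, abs_pow, abs_of_nonneg ht0]
  exact mul_le_mul_of_nonneg_left (pow_le_of_le_one ht0 ht1 k.succ_ne_zero) (abs_nonneg _)

end Polynomial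

namespace Real

noncomputable def sigmoidIteratedDerivPoly : ℕ → ℝ[X]
  | 0 => X
  | n + 1 => derivative (sigmoidIteratedDerivPoly n) * (X - X ^ 2)

lemma hasDerivAt_eval_sigmoid (p : ℝ[X]) (x : ℝ) :
    HasDerivAt (fun y => p.eval (sigmoid y)) ((derivative p * (X - X ^ 2)).eval (sigmoid x)) x :=
  ((p.hasDerivAt (sigmoid x)).comp x (hasDerivAt_sigmoid x)).congr_deriv <| by
    simp only [eval_mul, eval_sub, eval_X, eval_pow]
    ring

lemma iteratedDeriv_sigmoid (n : ℕ) :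
    iteratedDeriv n sigmoid = fun x => (sigmoidIteratedDerivPoly n).eval (sigmoid x) := by
  induction n with
  | zero => simp [sigmoidIteratedDerivPoly]
  | succ n ih =>
    rw [iteratedDeriv_succ, ih]
    exact funext fun x => (hasDerivAt_eval_sigmoid _ x).deriv

lemma coeff_sigmoidIteratedDerivPoly_zero (n : ℕ) :
    (sigmoidIteratedDerivPoly n).coeff 0 = 0 := by
  cases n <;> simp [sigmoidIteratedDerivPoly, mul_coeff_zero]

lemma coeff_sigmoidIteratedDerivPoly_succ (n k : ℕ) :
    (sigmoidIteratedDerivPoly n).coeff (k + 1) =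
      (-1) ^ k * k.factorial * Nat.stirlingSecond (n + 1) (k + 1) := by
  induction n generalizing k with
  | zero =>
    rcases k with _ | k
    · simp [sigmoidIteratedDerivPoly, Nat.stirlingSecond_self]
    · simp [sigmoidIteratedDerivPoly, coeff_X, Nat.stirlingSecond_eq_zero_of_lt]
  | succ n ih =>
    rcases k with _ | k
    · simp [sigmoidIteratedDerivPoly, mul_sub, coeff_derivative, ih, coeff_mul_X_pow',
        Nat.stirlingSecond_succ_succ]
    · rw [sigmoidIteratedDerivPoly, mul_sub, coeff_sub, coeff_mul_X, coeff_mul_X_pow,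
        coeff_derivative, coeff_derivative, ih, ih, Nat.stirlingSecond_succ_succ (n + 1) (k + 1)]
      push_cast [Nat.factorial_succ]
      ring

lemma natDegree_sigmoidIteratedDerivPoly_le (n : ℕ) :
    (sigmoidIteratedDerivPoly n).natDegree ≤ n + 1 := by
  rw [natDegree_le_iff_coeff_eq_zero]
  rintro (_ | k) hk
  · omega
  · simp [coeff_sigmoidIteratedDerivPoly_succ, Nat.stirlingSecond_eq_zero_of_lt hk]

lemma sum_abs_coeff_sigmoidIteratedDerivPoly_le (n : ℕ) :
    ∑ k ∈ range (n + 1), |(sigmoidIteratedDerivPoly n).coeff (k + 1)| ≤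
      (n + 1).factorial * ((Icc 1 (n + 1)).sup (Nat.stirlingSecond (n + 1)) : ℕ) := by
  set M := (Icc 1 (n + 1)).sup (Nat.stirlingSecond (n + 1))
  calc ∑ k ∈ range (n + 1), |(sigmoidIteratedDerivPoly n).coeff (k + 1)|
      ≤ ∑ _k ∈ range (n + 1), (n.factorial * M : ℝ) := by
        refine sum_le_sum fun k hk => ?_
        have hkn : k ≤ n := Nat.lt_succ_iff.mp (mem_range.mp hk)
        rw [coeff_sigmoidIteratedDerivPoly_succ, abs_mul, abs_mul, abs_pow, abs_neg, abs_one,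
          one_pow, one_mul, Nat.abs_cast, Nat.abs_cast]
        gcongr
        exact le_sup (mem_Icc.mpr ⟨k.succ_pos, Nat.succ_le_succ hkn⟩)
    _ = (n + 1).factorial * M := by
        rw [sum_const, card_range, nsmul_eq_mul, Nat.factorial_succ]
        push_cast
        ring

lemma abs_iteratedDeriv_sigmoid_le (n : ℕ) (x : ℝ) :
    |iteratedDeriv n sigmoid x| ≤
      (n + 1).factorial * ((Icc 1 (n + 1)).sup (Nat.stirlingSecond (n + 1)) : ℕ) * sigmoid x := by
  rw [iteratedDeriv_sigmoid]
  exact (abs_eval_le_sum_abs_coeff_succ_mul (natDegree_sigmoidIteratedDerivPoly_le n)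
    (coeff_sigmoidIteratedDerivPoly_zero n) (sigmoid_nonneg x) (sigmoid_le_one x)).trans
    (mul_le_mul_of_nonneg_right (sum_abs_coeff_sigmoidIteratedDerivPoly_le n) (sigmoid_nonneg x))

lemma iteratedDeriv_sigmoid_neg {n : ℕ} (hn : n ≠ 0) (x : ℝ) :
    iteratedDeriv n sigmoid (-x) = (-1) ^ (n + 1) * iteratedDeriv n sigmoid x := by
  have h := iteratedDeriv_comp_neg n sigmoid x
  simp only [sigmoid_neg] at h
  rw [iteratedDeriv_const_sub (Nat.pos_of_ne_zero hn), iteratedDeriv_neg, smul_eq_mul] at h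
  rw [pow_succ, mul_assoc, neg_one_mul, h, ← mul_assoc, ← pow_add, Even.neg_one_pow ⟨n, rfl⟩,
    one_mul]

end Real

theorem stmt_10 (n : ℕ) (hn : 1 ≤ n) (x : ℝ) :
    |iteratedDeriv n logistic x| ≤
      ((n + 1).factorial : ℝ) * (((Finset.Icc 1 (n + 1)).sup (stirling2 (n + 1)) : ℕ) : ℝ)
        * logistic (min x (-x)) ∧
    |iteratedDeriv n logistic x| ≤
      ((n + 1).factorial : ℝ) * (((Finset.Icc 1 (n + 1)).sup (stirling2 (n + 1)) : ℕ) : ℝ)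
        * min (logistic x) (logistic (-x)) := by
  rw [logistic_eq_sigmoid, stirling2_eq_stirlingSecond, Real.sigmoid_monotone.map_min, and_self,
    mul_min_of_nonneg _ _ (by positivity)]
  refine le_min (Real.abs_iteratedDeriv_sigmoid_le n x) ?_
  have heven : |iteratedDeriv n Real.sigmoid (-x)| = |iteratedDeriv n Real.sigmoid x| := by
    simp [Real.iteratedDeriv_sigmoid_neg (Nat.one_le_iff_ne_zero.mp hn), abs_mul]
  exact heven ▸ Real.abs_iteratedDeriv_sigmoid_le n (-x)
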